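/- Let R₁ and R₂ denote inversions (reflections) with respect to the circles ∂B₁ and ∂B₂, where B₁ and B₂ are disjoint open disks in ℝ² with positive distance between their closures. Then the composition R₁ ∘ R₂, restricted to the closed disk B̄₁, is a contraction mapping of B̄₁ into itself, and hence has a unique fixed point p₁ ∈ B₁. -/

import Mathlib

/-!
`circleReflection c r` is Mathlib's `EuclideanGeometry.inversion c r`, which sends `x` to distance
`r² / |x - c|` from `c` and multiplies `|x - y|` by `r² / (|x - c| |y - c|)`. If the closed disks are
at distance `d > 0`, every point of `B̄₁` is at distance at least `r₂ + d` from `c₂`, so `R₂` maps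
`B̄₁` into `B̄(c₂, r₂² / (r₂ + d)) ⊆ B̄₂` with Lipschitz constant `r₂² / (r₂ + d)² < 1`; symmetrically
`R₁` maps `B̄₂` into `B̄(c₁, r₁² / (r₁ + d)) ⊆ B₁` with constant `r₁² / (r₁ + d)² < 1`. Banach's
fixed-point theorem on the complete set `B̄₁` then gives the unique fixed point, which lies in `B₁`.
-/

open Metric

noncomputable def circleReflection (c : ℂ) (r : ℝ) (x : ℂ) : ℂ :=
  c + (r ^ 2 / ‖x - c‖ ^ 2) • (x - c)

open EuclideanGeometry Set AffineMap Function

theorem circleReflection_eq_inversion (c : ℂ) (r : ℝ) : circleReflection c r = inversion c r := by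
  funext x
  simp only [circleReflection, inversion, vsub_eq_sub, vadd_eq_add, dist_eq_norm, div_pow]
  exact add_comm _ _

theorem add_le_dist_of_forall_le_dist {V P : Type*} [SeminormedAddCommGroup V] [NormedSpace ℝ V]
    [PseudoMetricSpace P] [NormedAddTorsor V P] {x b : P} {s d : ℝ} (hs : 0 ≤ s) (hd : 0 < d)
    (h : ∀ y ∈ closedBall b s, d ≤ dist x y) : s + d ≤ dist x b := by
  have hsx : s < dist x b := by
    by_contra! hxb
    have := h x (mem_closedBall.2 hxb)
    rw [dist_self] at this
    linarith
  have hxb : 0 < dist x b := hs.trans_lt hsx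
  set t := s / dist x b
  have ht : t ≤ 1 := (div_le_one hxb).2 hsx.le
  have hnear : lineMap b x t ∈ closedBall b s := by
    rw [mem_closedBall, dist_lineMap_left, Real.norm_of_nonneg (by positivity), dist_comm,
      div_mul_cancel₀ _ hxb.ne']
  have := h _ hnear
  rw [dist_comm, dist_lineMap_right, Real.norm_of_nonneg (by linarith), dist_comm, sub_mul,
    one_mul, div_mul_cancel₀ _ hxb.ne'] at this
  linarith

theorem sq_div_add_lt {r d : ℝ} (hr : 0 < r) (hd : 0 < d) : r ^ 2 / (r + d) < r := by
  rw [div_lt_iff₀ (by positivity)]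
  nlinarith

theorem sq_div_add_sq_lt_one {r d : ℝ} (hr : 0 ≤ r) (hd : 0 < d) : r ^ 2 / (r + d) ^ 2 < 1 := by
  rw [div_lt_one (by positivity)]
  gcongr
  linarith

section Inversion

variable {V P : Type*} [NormedAddCommGroup V] [InnerProductSpace ℝ V] [MetricSpace P]
  [NormedAddTorsor V P] {c : P} {R ρ : ℝ}

theorem mapsTo_inversion_closedBall (hρ : 0 < ρ) :
    MapsTo (inversion c R) {x | ρ ≤ dist x c} (closedBall c (R ^ 2 / ρ)) := fun x hx => by
  rw [mem_closedBall, dist_inversion_center]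
  exact div_le_div_of_nonneg_left (sq_nonneg R) hρ hx

theorem lipschitzOnWith_inversion (hρ : 0 < ρ) :
    LipschitzOnWith (R ^ 2 / ρ ^ 2).toNNReal (inversion c R) {x | ρ ≤ dist x c} := by
  refine LipschitzOnWith.of_dist_le_mul fun x (hx : ρ ≤ dist x c) y (hy : ρ ≤ dist y c) => ?_
  rw [dist_inversion_inversion (dist_pos.1 (hρ.trans_le hx)) (dist_pos.1 (hρ.trans_le hy)),
    Real.coe_toNNReal _ (by positivity)]
  gcongr
  rw [sq]
  exact mul_le_mul hx hy hρ.le (hρ.le.trans hx)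

theorem mapsTo_inversion_of_forall_le_dist {s : Set P} {r d : ℝ} (hr : 0 ≤ r) (hd : 0 < d)
    (hsep : ∀ x ∈ s, ∀ y ∈ closedBall c r, d ≤ dist x y) :
    MapsTo (inversion c r) s (closedBall c (r ^ 2 / (r + d))) :=
  (mapsTo_inversion_closedBall (by positivity)).mono_left
    fun x hx => add_le_dist_of_forall_le_dist hr hd (hsep x hx)

theorem lipschitzOnWith_inversion_of_forall_le_dist {s : Set P} {r d : ℝ} (hr : 0 ≤ r)
    (hd : 0 < d) (hsep : ∀ x ∈ s, ∀ y ∈ closedBall c r, d ≤ dist x y) :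
    LipschitzOnWith (r ^ 2 / (r + d) ^ 2).toNNReal (inversion c r) s :=
  (lipschitzOnWith_inversion (by positivity)).mono
    fun x hx => add_le_dist_of_forall_le_dist hr hd (hsep x hx)

end Inversion

theorem LipschitzOnWith.existsUnique_isFixedPt {α : Type*} [MetricSpace α] {f : α → α}
    {s : Set α} {K : NNReal} (hf : LipschitzOnWith K f s) (hK : K < 1) (hfs : MapsTo f s s)
    (hsc : IsComplete s) (hne : s.Nonempty) : ∃! p, p ∈ s ∧ IsFixedPt f p := by
  have hcontr : ContractingWith K (hfs.restrict f s s) := ⟨hK, hf.mapsToRestrict hfs⟩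
  obtain ⟨x, hx⟩ := hne
  obtain ⟨p, hp, hfix, -⟩ := hcontr.exists_fixedPoint' hsc hfs hx (edist_ne_top _ _)
  refine ⟨p, ⟨hp, hfix⟩, fun q ⟨hq, hqfix⟩ => ?_⟩
  have := hcontr.fixedPoint_unique' (x := ⟨q, hq⟩) (y := ⟨p, hp⟩) (Subtype.ext hqfix)
    (Subtype.ext hfix)
  exact congrArg Subtype.val this

/-- If `B₁ = B(c₁,r₁)` and `B₂ = B(c₂,r₂)` are open disks whose closures are at
positive distance, then `R₁ ∘ R₂` is a contraction of `B̄₁` into `B₁` and hence has a unique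
fixed point `p₁ ∈ B₁`. -/
theorem stmt_4 (c₁ c₂ : ℂ) (r₁ r₂ : ℝ) (hr₁ : 0 < r₁) (hr₂ : 0 < r₂)
    (hsep : ∃ d > 0, ∀ x ∈ closedBall c₁ r₁, ∀ y ∈ closedBall c₂ r₂, d ≤ dist x y) :
    (∃ K : NNReal, K < 1 ∧
      LipschitzOnWith K (fun x => circleReflection c₁ r₁ (circleReflection c₂ r₂ x))
        (closedBall c₁ r₁)) ∧
    Set.MapsTo (fun x => circleReflection c₁ r₁ (circleReflection c₂ r₂ x))
      (closedBall c₁ r₁) (ball c₁ r₁) ∧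
    ∃! p : ℂ, p ∈ ball c₁ r₁ ∧ circleReflection c₁ r₁ (circleReflection c₂ r₂ p) = p := by
  obtain ⟨d, hd, hsep⟩ := hsep
  have hsep' : ∀ y ∈ closedBall c₂ r₂, ∀ x ∈ closedBall c₁ r₁, d ≤ dist y x :=
    fun y hy x hx => dist_comm x y ▸ hsep x hx y hy
  simp only [circleReflection_eq_inversion]
  have maps₂ : MapsTo (inversion c₂ r₂) (closedBall c₁ r₁) (closedBall c₂ r₂) :=
    (mapsTo_inversion_of_forall_le_dist hr₂.le hd hsep).mono_right
      (closedBall_subset_closedBall (sq_div_add_lt hr₂ hd).le)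
  have maps₁ : MapsTo (inversion c₁ r₁) (closedBall c₂ r₂) (ball c₁ r₁) :=
    (mapsTo_inversion_of_forall_le_dist hr₁.le hd hsep').mono_right
      (closedBall_subset_ball (sq_div_add_lt hr₁ hd))
  have maps := maps₁.comp maps₂
  have lip := (lipschitzOnWith_inversion_of_forall_le_dist hr₁.le hd hsep').comp
    (lipschitzOnWith_inversion_of_forall_le_dist hr₂.le hd hsep) maps₂
  have hK := mul_lt_one_of_nonneg_of_lt_one_left zero_le
    (Real.toNNReal_lt_one.2 (sq_div_add_sq_lt_one hr₁.le hd))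
    (Real.toNNReal_lt_one.2 (sq_div_add_sq_lt_one hr₂.le hd)).le
  obtain ⟨p, ⟨hp, hpfix⟩, huniq⟩ := lip.existsUnique_isFixedPt hK
    (maps.mono_right ball_subset_closedBall) isClosed_closedBall.isComplete
    (nonempty_closedBall.2 hr₁.le)
  refine ⟨⟨_, hK, lip⟩, maps, p, ⟨hpfix ▸ maps hp, hpfix⟩, fun q ⟨hq, hqfix⟩ => ?_⟩
  exact huniq q ⟨ball_subset_closedBall hq, hqfix⟩
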